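/- arXiv:1504.05547 — 2 statements merged into one kernel-verified Lean document; each statement's English description precedes it below -/
import Mathlib

section
/- Let S be a collection of k-element subsets of {1,…,n} and let (c_J)_{J∈S} be complex signs (|c_J| = 1). Define commuting operators T₁,…,T_n on the Hilbert space H with orthonormal basis {e} ∪ {e(j₁,…,j_m) : 0 ≤ m ≤ k−2, 1 ≤ j₁ ≤ ⋯ ≤ j_m ≤ n} ∪ {f₁,…,f_n} ∪ {g} by: T_l e = e(l); T_l e(j₁,…,j_m) = e[l,j₁,…,j_m] for m < k−2; T_l e(j₁,…,j_{k−2}) = ∑_i γ_{{i,l,j₁,…,j_{k−2}}} f_i; T_l f_i = δ_{l,i} g; T_l g = 0, where γ_A = c_A if A ∈ S and 0 otherwise, and [·] denotes nondecreasing reordering. Then for the polynomial p(z) = ∑_{J ∈ S} c_J z_J, we have p(T₁,…,T_n) e = |S| · g. -/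
/-!
Below degree `k - 2` each `T_l` only appends `l` to the index of `e`, so the first `k - 2` factors
of a monomial `z_J` send `e` to `e(J')`. The remaining factors `T_a T_{a'}` give
`T_a (∑_i γ_{i + a' + J'} f_i) = γ_J g`, since `T_a` kills every `f_i` with `i ≠ a`;
finally `c_J γ_J = c_J² = 1` for `J ∈ S`.
-/

section LadderOperators

variable {R M ι : Type*} [Semiring R] [TopologicalSpace M] [AddCommMonoid M] [Module R M]
  {T : ι → M →L[R] M}

theorem list_prod_map_apply_zero_of_raising {e : Multiset ι → M} {m : ℕ}
    (hT : ∀ l s, Multiset.card s < m → T l (e s) = e (l ::ₘ s)) :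
    ∀ L : List ι, L.length ≤ m → (L.map T).prod (e 0) = e L
  | [], _ => by simp
  | a :: L, hlen => by
    have hL : L.length < m := hlen
    rw [List.map_cons, List.prod_cons, mul_apply_eq_comp,
      list_prod_map_apply_zero_of_raising hT L hL.le, hT a L (by simpa using hL)]
    rfl

theorem apply_apply_of_card_eq [Fintype ι] [DecidableEq ι] {e : Multiset ι → M} {f : ι → M}
    {g : M} {γ : Multiset ι → R} {m : ℕ}
    (hT2 : ∀ l s, Multiset.card s = m → T l (e s) = ∑ i, γ (i ::ₘ l ::ₘ s) • f i)
    (hT3 : ∀ l i, T l (f i) = if l = i then g else 0)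
    (a a' : ι) {s : Multiset ι} (hs : Multiset.card s = m) :
    T a (T a' (e s)) = γ (a ::ₘ a' ::ₘ s) • g := by
  rw [hT2 a' s hs, map_sum, Finset.sum_eq_single a]
  · rw [map_smul, hT3, if_pos rfl]
  · intro i _ hi
    rw [map_smul, hT3, if_neg (Ne.symm hi), smul_zero]
  · exact fun ha => absurd (Finset.mem_univ a) ha

theorem list_prod_map_apply_zero_of_length_eq_add_two [Fintype ι] [DecidableEq ι]
    {e : Multiset ι → M} {f : ι → M} {g : M} {γ : Multiset ι → R} {m : ℕ}
    (hT1 : ∀ l s, Multiset.card s < m → T l (e s) = e (l ::ₘ s))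
    (hT2 : ∀ l s, Multiset.card s = m → T l (e s) = ∑ i, γ (i ::ₘ l ::ₘ s) • f i)
    (hT3 : ∀ l i, T l (f i) = if l = i then g else 0)
    {L : List ι} (hL : L.length = m + 2) :
    (L.map T).prod (e 0) = γ L • g := by
  obtain _ | ⟨a, _ | ⟨a', L⟩⟩ := L
  · simp at hL
  · simp at hL
  have hlen : L.length = m := by simpa using hL
  simp only [List.map_cons, List.prod_cons, mul_apply_eq_comp]
  rw [list_prod_map_apply_zero_of_raising hT1 L hlen.le,
    apply_apply_of_card_eq hT2 hT3 a a' (by simpa using hlen)]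
  rfl

end LadderOperators

theorem stmt8_general (n k : ℕ) (hk : 3 ≤ k)
    (H : Type*) [NormedAddCommGroup H] [InnerProductSpace ℂ H]
    (b : HilbertBasis (Multiset (Fin n) ⊕ (Fin n) ⊕ Unit) ℂ H)
    (S : Finset (Multiset (Fin n)))
    (hScard : ∀ J ∈ S, Multiset.card J = k) (hSnodup : ∀ J ∈ S, J.Nodup)
    (c : Multiset (Fin n) → ℂ) (hc : ∀ J ∈ S, c J = 1 ∨ c J = -1)
    (γ : Multiset (Fin n) → ℂ) (hγ : ∀ A, γ A = if A ∈ S then c A else 0)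
    (T : Fin n → H →L[ℂ] H) (hcomm : ∀ l m, Commute (T l) (T m))
    (hT1 : ∀ (l : Fin n) (s : Multiset (Fin n)), Multiset.card s < k - 2 →
      T l (b (Sum.inl s)) = b (Sum.inl (l ::ₘ s)))
    (hT2 : ∀ (l : Fin n) (s : Multiset (Fin n)), Multiset.card s = k - 2 →
      T l (b (Sum.inl s)) = ∑ i : Fin n, γ (i ::ₘ l ::ₘ s) • b (Sum.inr (Sum.inl i)))
    (hT3 : ∀ (l i : Fin n),
      T l (b (Sum.inr (Sum.inl i))) = if l = i then b (Sum.inr (Sum.inr ())) else 0) :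
    (∑ J ∈ S, c J • (Multiset.toFinset J).noncommProd T (fun i _ j _ _ => hcomm i j))
        (b (Sum.inl 0)) = (S.card : ℂ) • b (Sum.inr (Sum.inr ())) := by
  have hmonomial : ∀ J ∈ S, (c J • J.toFinset.noncommProd T (fun i _ j _ _ => hcomm i j))
      (b (Sum.inl 0)) = b (Sum.inr (Sum.inr ())) := by
    intro J hJ
    obtain ⟨L, rfl⟩ : ∃ L : List (Fin n), (L : Multiset (Fin n)) = J := Quotient.exists_rep J
    have hL : L.length = k - 2 + 2 := by have := hScard _ hJ; simp at this; omega
    have hprod : (L : Multiset (Fin n)).toFinset.noncommProd T (fun i _ j _ _ => hcomm i j) =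
        (L.map T).prod := Finset.noncommProd_toFinset L T _ (hSnodup _ hJ)
    rw [smul_apply, hprod,
      list_prod_map_apply_zero_of_length_eq_add_two (e := fun s => b (Sum.inl s)) hT1 hT2 hT3 hL,
      hγ, if_pos hJ, smul_smul]
    rcases hc _ hJ with h | h <;> rw [h] <;> norm_num
  rw [_root_.sum_apply, Finset.sum_congr rfl hmonomial, Finset.sum_const,
    Nat.cast_smul_eq_nsmul]

/-- in the Dixon–Varopoulos construction (operators `T_l` acting on a Hilbert
space with orthonormal basis `e = e()`, `e(j₁,…,j_m)` (`m ≤ k-2`, encoded by multisets),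
`f_i`, `g` by the listed rules), the polynomial `p(z) = ∑_{J∈S} c_J z_J` with signs `c_J`
satisfies `p(T₁,…,T_n) e = |S| · g`. -/
theorem stmt8 (n k : ℕ) (hk : 3 ≤ k)
    (H : Type*) [NormedAddCommGroup H] [InnerProductSpace ℂ H] [CompleteSpace H]
    (b : HilbertBasis (Multiset (Fin n) ⊕ (Fin n) ⊕ Unit) ℂ H)
    (S : Finset (Multiset (Fin n)))
    (hScard : ∀ J ∈ S, Multiset.card J = k) (hSnodup : ∀ J ∈ S, J.Nodup)
    (c : Multiset (Fin n) → ℂ) (hc : ∀ J ∈ S, c J = 1 ∨ c J = -1)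
    (γ : Multiset (Fin n) → ℂ) (hγ : ∀ A, γ A = if A ∈ S then c A else 0)
    (T : Fin n → H →L[ℂ] H) (hcomm : ∀ l m, Commute (T l) (T m))
    (hT1 : ∀ (l : Fin n) (s : Multiset (Fin n)), Multiset.card s < k - 2 →
      T l (b (Sum.inl s)) = b (Sum.inl (l ::ₘ s)))
    (hT2 : ∀ (l : Fin n) (s : Multiset (Fin n)), Multiset.card s = k - 2 →
      T l (b (Sum.inl s)) = ∑ i : Fin n, γ (i ::ₘ l ::ₘ s) • b (Sum.inr (Sum.inl i)))
    (hT3 : ∀ (l i : Fin n),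
      T l (b (Sum.inr (Sum.inl i))) = if l = i then b (Sum.inr (Sum.inr ())) else 0)
    (hT4 : ∀ l : Fin n, T l (b (Sum.inr (Sum.inr ()))) = 0) :
    (∑ J ∈ S, c J • (Multiset.toFinset J).noncommProd T (fun i _ j _ _ => hcomm i j))
        (b (Sum.inl 0)) = (S.card : ℂ) • b (Sum.inr (Sum.inr ())) :=
  stmt8_general n k hk H b S hScard hSnodup c hc γ hγ T hcomm hT1 hT2 hT3
end

section
/- With the operators T₁,…,T_n defined as in the Dixon construction from an S_p(k−1,k,n) partial Steiner system, the operators pairwise commute: T_l T_m = T_m T_l for all l, m. -/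
/-! On each basis vector, `T l (T m x)` depends on `l` and `m` only through the multiset
`{l, m}`: on `e(s)` it is `e(l, m, s)`, `∑ i, γ(i, l, m, s) f_i`, `γ(l, m, s) g` or `0`
according to the size of `s`, and it vanishes on the `f_i` and on `g`. Since `γ` is a function of
multisets, this is symmetric in `l, m`, and bounded operators agreeing on a Hilbert basis are
equal. -/

theorem HilbertBasis.ext_continuousLinearMap {ι 𝕜 E F : Type*} [RCLike 𝕜]
    [NormedAddCommGroup E] [InnerProductSpace 𝕜 E] [TopologicalSpace F] [T2Space F]
    [AddCommMonoid F] [Module 𝕜 F] (b : HilbertBasis ι 𝕜 E) {f g : E →L[𝕜] F}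
    (h : ∀ i, f (b i) = g (b i)) : f = g :=
  ContinuousLinearMap.ext_on (Submodule.dense_iff_topologicalClosure_eq_top.mpr b.dense_span)
    (by rintro _ ⟨i, rfl⟩; exact h i)

namespace DixonOperators

variable {n k : ℕ} {H : Type*} [NormedAddCommGroup H] [InnerProductSpace ℂ H]
  {b : HilbertBasis (Multiset (Fin n) ⊕ Fin n ⊕ Unit) ℂ H} {γ : Multiset (Fin n) → ℂ}
  {T : Fin n → H →L[ℂ] H}

theorem apply_inl_cons_comm
    (hT1 : ∀ (l : Fin n) (s : Multiset (Fin n)), Multiset.card s < k - 2 →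
      T l (b (Sum.inl s)) = b (Sum.inl (l ::ₘ s)))
    (hT2 : ∀ (l : Fin n) (s : Multiset (Fin n)), Multiset.card s = k - 2 →
      T l (b (Sum.inl s)) = ∑ i : Fin n, γ (i ::ₘ l ::ₘ s) • b (Sum.inr (Sum.inl i)))
    {s : Multiset (Fin n)} (hs : Multiset.card s < k - 2) (l m : Fin n) :
    T l (b (Sum.inl (m ::ₘ s))) = T m (b (Sum.inl (l ::ₘ s))) := by
  have hcard (j : Fin n) : Multiset.card (j ::ₘ s) = Multiset.card s + 1 :=
    Multiset.card_cons j s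
  rcases Nat.succ_le_of_lt hs |>.eq_or_lt with heq | hlt
  · rw [hT2 l _ (hcard m ▸ heq), hT2 m _ (hcard l ▸ heq), Multiset.cons_swap l m s]
  · rw [hT1 l _ (hcard m ▸ hlt), hT1 m _ (hcard l ▸ hlt), Multiset.cons_swap l m s]

theorem apply_sum_smul_inr
    (hT3 : ∀ (l i : Fin n),
      T l (b (Sum.inr (Sum.inl i))) = if l = i then b (Sum.inr (Sum.inr ())) else 0)
    (l : Fin n) (a : Fin n → ℂ) :
    T l (∑ i, a i • b (Sum.inr (Sum.inl i))) = a l • b (Sum.inr (Sum.inr ())) := by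
  simp only [map_sum, map_smul, hT3, smul_ite, smul_zero, Finset.sum_ite_eq, Finset.mem_univ,
    if_true]

theorem apply_apply_inr_inl_eq_zero
    (hT3 : ∀ (l i : Fin n),
      T l (b (Sum.inr (Sum.inl i))) = if l = i then b (Sum.inr (Sum.inr ())) else 0)
    (hT4 : ∀ l : Fin n, T l (b (Sum.inr (Sum.inr ()))) = 0) (l m i : Fin n) :
    T l (T m (b (Sum.inr (Sum.inl i)))) = 0 := by
  rw [hT3]
  split_ifs
  · exact hT4 l
  · exact map_zero _

theorem apply_apply_basis_comm
    (hT1 : ∀ (l : Fin n) (s : Multiset (Fin n)), Multiset.card s < k - 2 →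
      T l (b (Sum.inl s)) = b (Sum.inl (l ::ₘ s)))
    (hT2 : ∀ (l : Fin n) (s : Multiset (Fin n)), Multiset.card s = k - 2 →
      T l (b (Sum.inl s)) = ∑ i : Fin n, γ (i ::ₘ l ::ₘ s) • b (Sum.inr (Sum.inl i)))
    (hT0 : ∀ (l : Fin n) (s : Multiset (Fin n)), k - 2 < Multiset.card s →
      T l (b (Sum.inl s)) = 0)
    (hT3 : ∀ (l i : Fin n),
      T l (b (Sum.inr (Sum.inl i))) = if l = i then b (Sum.inr (Sum.inr ())) else 0)
    (hT4 : ∀ l : Fin n, T l (b (Sum.inr (Sum.inr ()))) = 0)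
    (l m : Fin n) (x : Multiset (Fin n) ⊕ Fin n ⊕ Unit) :
    T l (T m (b x)) = T m (T l (b x)) := by
  rcases x with s | i | ⟨⟩
  · rcases lt_trichotomy (Multiset.card s) (k - 2) with hs | hs | hs
    · rw [hT1 m s hs, hT1 l s hs]
      exact apply_inl_cons_comm hT1 hT2 hs l m
    · rw [hT2 m s hs, hT2 l s hs, apply_sum_smul_inr hT3, apply_sum_smul_inr hT3,
        Multiset.cons_swap l m s]
    · rw [hT0 m s hs, hT0 l s hs, map_zero, map_zero]
  · rw [apply_apply_inr_inl_eq_zero hT3 hT4, apply_apply_inr_inl_eq_zero hT3 hT4]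
  · rw [hT4, hT4, map_zero, map_zero]

end DixonOperators

theorem stmt10_general (n k : ℕ)
    (H : Type*) [NormedAddCommGroup H] [InnerProductSpace ℂ H]
    (b : HilbertBasis (Multiset (Fin n) ⊕ (Fin n) ⊕ Unit) ℂ H)
    (γ : Multiset (Fin n) → ℂ)
    (T : Fin n → H →L[ℂ] H)
    (hT1 : ∀ (l : Fin n) (s : Multiset (Fin n)), Multiset.card s < k - 2 →
      T l (b (Sum.inl s)) = b (Sum.inl (l ::ₘ s)))
    (hT2 : ∀ (l : Fin n) (s : Multiset (Fin n)), Multiset.card s = k - 2 →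
      T l (b (Sum.inl s)) = ∑ i : Fin n, γ (i ::ₘ l ::ₘ s) • b (Sum.inr (Sum.inl i)))
    (hT0 : ∀ (l : Fin n) (s : Multiset (Fin n)), k - 2 < Multiset.card s →
      T l (b (Sum.inl s)) = 0)
    (hT3 : ∀ (l i : Fin n),
      T l (b (Sum.inr (Sum.inl i))) = if l = i then b (Sum.inr (Sum.inr ())) else 0)
    (hT4 : ∀ l : Fin n, T l (b (Sum.inr (Sum.inr ()))) = 0) :
    ∀ l m : Fin n, T l * T m = T m * T l := fun l m =>
  b.ext_continuousLinearMap fun x =>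
    DixonOperators.apply_apply_basis_comm hT1 hT2 hT0 hT3 hT4 l m x

/-- the operators of the Dixon construction from a partial Steiner system
`S_p(k-1,k,n)` pairwise commute. -/
theorem stmt10 (n k : ℕ) (hk : 3 ≤ k)
    (H : Type*) [NormedAddCommGroup H] [InnerProductSpace ℂ H] [CompleteSpace H]
    (b : HilbertBasis (Multiset (Fin n) ⊕ (Fin n) ⊕ Unit) ℂ H)
    (S : Finset (Multiset (Fin n)))
    (hScard : ∀ J ∈ S, Multiset.card J = k) (hSnodup : ∀ J ∈ S, J.Nodup)
    (hSteiner : ∀ J ∈ S, ∀ J' ∈ S, J ≠ J' → Multiset.card (J ∩ J') ≤ k - 2)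
    (c : Multiset (Fin n) → ℂ) (hc : ∀ J ∈ S, c J = 1 ∨ c J = -1)
    (γ : Multiset (Fin n) → ℂ) (hγ : ∀ A, γ A = if A ∈ S then c A else 0)
    (T : Fin n → H →L[ℂ] H)
    (hT1 : ∀ (l : Fin n) (s : Multiset (Fin n)), Multiset.card s < k - 2 →
      T l (b (Sum.inl s)) = b (Sum.inl (l ::ₘ s)))
    (hT2 : ∀ (l : Fin n) (s : Multiset (Fin n)), Multiset.card s = k - 2 →
      T l (b (Sum.inl s)) = ∑ i : Fin n, γ (i ::ₘ l ::ₘ s) • b (Sum.inr (Sum.inl i)))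
    (hT0 : ∀ (l : Fin n) (s : Multiset (Fin n)), k - 2 < Multiset.card s →
      T l (b (Sum.inl s)) = 0)
    (hT3 : ∀ (l i : Fin n),
      T l (b (Sum.inr (Sum.inl i))) = if l = i then b (Sum.inr (Sum.inr ())) else 0)
    (hT4 : ∀ l : Fin n, T l (b (Sum.inr (Sum.inr ()))) = 0) :
    ∀ l m : Fin n, T l * T m = T m * T l :=
  stmt10_general n k H b γ T hT1 hT2 hT0 hT3 hT4
end
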